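/- arXiv:1803.10544 — 2 statements merged into one kernel-verified Lean document; each statement's English description precedes it below -/
import Mathlib

section
/- Fix r, s > 0. For all f, g ∈ C^{1,r,s}(ℝ), the limit lim_{μ→∞} V_μ(f,g) exists and equals (1/2)·V_0(f,g), i.e. lim_{μ→∞} V_μ(f,g) = (1/(4π²)) ∬_{ℝ²} (f(x)−f(y))(g(x)−g(y))/(x−y)² dx dy. -/
open MeasureTheory ProbabilityTheory Filter Topology
open scoped ENNReal NNReal BigOperators

noncomputable section

/-- Trace of `f` applied to a Hermitian matrix, via the spectral functional calculus. -/
def trFun {N : ℕ} (M : Matrix (Fin N) (Fin N) ℂ) (f : ℝ → ℝ) : ℝ :=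
  if h : M.IsHermitian then ∑ i, f (h.eigenvalues i) else 0

/-- The semicircle density `ρ(x) = (1/2π) √((4 − x²)₊)`. -/
def semicircle (x : ℝ) : ℝ := (1 / (2 * Real.pi)) * Real.sqrt (max (4 - x ^ 2) 0)

/-- The mesoscopic linear statistic `Ẑ(f) = tr f((H−E)/η) − N ∫ ρ(x) f((x−E)/η) dx`. -/
def Zhat {N : ℕ} (M : Matrix (Fin N) (Fin N) ℂ) (E₀ η : ℝ) (f : ℝ → ℝ) : ℝ :=
  trFun M (fun x => f ((x - E₀) / η)) -
    N * ∫ x in (-2 : ℝ)..2, semicircle x * f ((x - E₀) / η)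

/-- The covariance `V_μ(f,g)` for finite `μ ≥ 0`. -/
def Vmu (μ : ℝ) (f g : ℝ → ℝ) : ℝ :=
  (1 / (4 * Real.pi ^ 2)) * ∫ q : ℝ × ℝ,
    (f q.1 - f q.2) * (g q.1 - g q.2) *
      (1 / (q.1 - q.2) ^ 2 + ((q.1 - q.2) ^ 2 - μ ^ 2) / ((q.1 - q.2) ^ 2 + μ ^ 2) ^ 2)

/-- The covariance `V_∞(f,g)`. -/
def Vinf (f g : ℝ → ℝ) : ℝ :=
  (1 / (4 * Real.pi ^ 2)) * ∫ q : ℝ × ℝ,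
    (f q.1 - f q.2) * (g q.1 - g q.2) / (q.1 - q.2) ^ 2

/-- The covariance `V_μ(f,g)` for `μ ∈ [0,∞]`. -/
def VmuE (μ : ℝ≥0∞) (f g : ℝ → ℝ) : ℝ :=
  if μ = ⊤ then Vinf f g else Vmu μ.toReal f g

/-- The class `C^{1,r,s}(ℝ)`. -/
structure MemC1rs (r s : ℝ) (f : ℝ → ℝ) : Prop where
  c1 : ContDiff ℝ 1 f
  holder : ∃ K : ℝ, ∀ x y : ℝ, |deriv f x - deriv f y| ≤ K * |x - y| ^ r
  decay : ∃ C : ℝ, ∀ x : ℝ, |f x| + |deriv f x| ≤ C * (1 + |x|) ^ (-(1 + s))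

/-- Basic structural conditions of a Wigner matrix with parameter `σ`. -/
structure IsWignerBase {Ω : Type} [MeasurableSpace Ω] (P : Measure Ω) (N : ℕ)
    (H : Ω → Matrix (Fin N) (Fin N) ℂ) (σ : ℝ) : Prop where
  herm : ∀ ω, (H ω).IsHermitian
  meas : ∀ i j, Measurable fun ω => H ω i j
  indep : iIndepFun
    (fun (q : {q : Fin N × Fin N // q.1 ≤ q.2}) ω => H ω q.1.1 q.1.2) P
  centered : ∀ i j, (∫ ω, H ω i j ∂P) = 0
  sq_int : ∀ i j, MemLp (fun ω => H ω i j) 2 P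
  variance : ∀ i j, i ≠ j → (∫ ω, ‖H ω i j‖ ^ 2 ∂P) = 1 / (N : ℝ)
  sigma2 : ∀ i j, i ≠ j → (∫ ω, (H ω i j) ^ 2 ∂P) = ((σ / (N : ℝ) : ℝ) : ℂ)

/-- All moments finite, uniformly in `N, i, j` (Definition (iii)'). -/
def AllMomentsBound (Ω : ℕ → Type) [∀ N, MeasurableSpace (Ω N)]
    (P : ∀ N, Measure (Ω N)) (H : ∀ N, Ω N → Matrix (Fin N) (Fin N) ℂ) : Prop :=
  (∀ (p : ℕ) (N : ℕ) (i j : Fin N), MemLp (fun ω => H N ω i j) p (P N)) ∧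
    ∀ p : ℕ, ∃ Cp : ℝ, ∀ (N : ℕ) (i j : Fin N),
      (∫ ω, ‖(Real.sqrt N : ℂ) * H N ω i j‖ ^ p ∂(P N)) ≤ Cp

/-- Convergence in distribution of real random variables, tested against
bounded continuous functions. -/
def TendstoInDistribution {Ω : ℕ → Type} [∀ N, MeasurableSpace (Ω N)]
    (P : ∀ N, Measure (Ω N)) (X : ∀ N, Ω N → ℝ) (μ : Measure ℝ) : Prop :=
  ∀ g : BoundedContinuousFunction ℝ ℝ,
    Tendsto (fun N => ∫ ω, g (X N ω) ∂(P N)) atTop (𝓝 (∫ x, g x ∂μ))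

/-!
Writing `d = x - y`, the kernel of `V_μ` is `1/d² + (d² - μ²)/(d² + μ²)²`, whose second term is
at most `(d² + μ²)⁻¹` in absolute value. So the kernel tends to `1/d²` pointwise, is bounded by
`2/d²` uniformly in `μ`, and equals `2/d²` at `μ = 0`; dominated convergence then gives the
limit once `(f x - f y) (g x - g y) / d²` is integrable. Since `2|ab| ≤ a² + b²` it suffices to
integrate `(f x - f y)² / d²`. With `w x = (1 + |x|)^(-(1+s))`, the mean value theorem near the
diagonal and the decay of `f` away from it bound this by a multiple of `(w x + w y) / (1 + d²)`,
which is integrable on `ℝ²` because it is a sum of convolution integrands of integrable functions.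
-/

lemma one_add_abs_rpow_neg_le {a c x : ℝ} (ha : 0 ≤ a) (hcx : |c - x| ≤ 1) :
    (1 + |c|) ^ (-a) ≤ 2 ^ a * (1 + |x|) ^ (-a) := by
  have hx : (1 + |x|) / 2 ≤ 1 + |c| := by
    have := abs_sub_abs_le_abs_sub x c
    rw [abs_sub_comm] at this
    linarith [abs_nonneg c]
  calc (1 + |c|) ^ (-a) ≤ ((1 + |x|) / 2) ^ (-a) :=
        Real.rpow_le_rpow_of_nonpos (by positivity) hx (neg_nonpos.2 ha)
    _ = 2 ^ a * (1 + |x|) ^ (-a) := by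
      rw [Real.div_rpow (by positivity) zero_le_two, Real.rpow_neg zero_le_two, div_inv_eq_mul,
        mul_comm]

lemma one_add_abs_rpow_neg_le_one {a : ℝ} (ha : 0 ≤ a) (x : ℝ) : (1 + |x|) ^ (-a) ≤ 1 :=
  Real.rpow_le_one_of_one_le_of_nonpos (le_add_of_nonneg_right (abs_nonneg x)) (neg_nonpos.2 ha)

lemma MeasureTheory.Integrable.add_mul_inv_one_add_sq_sub {w : ℝ → ℝ} (hw : Integrable w) :
    Integrable (fun q : ℝ × ℝ => (w q.1 + w q.2) * (1 + (q.1 - q.2) ^ 2)⁻¹) := by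
  have h₂ : Integrable (fun q : ℝ × ℝ => w q.2 * (1 + (q.1 - q.2) ^ 2)⁻¹) :=
    hw.convolution_integrand (ContinuousLinearMap.mul ℝ ℝ) integrable_inv_one_add_sq
  have h₁ : Integrable (fun q : ℝ × ℝ => w q.1 * (1 + (q.1 - q.2) ^ 2)⁻¹) :=
    h₂.swap.congr (ae_of_all _ fun q => by
      simp only [Function.comp_apply, Prod.fst_swap, Prod.snd_swap, ← neg_sub q.1, neg_sq])
  exact (h₁.add h₂).congr (ae_of_all _ fun q => (add_mul _ _ _).symm)

section Decay

variable {a C : ℝ} {f : ℝ → ℝ}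

lemma nonneg_of_abs_add_abs_deriv_le (hC : ∀ x, |f x| + |deriv f x| ≤ C * (1 + |x|) ^ (-a)) :
    0 ≤ C := by
  have h := hC 0
  simp only [abs_zero, add_zero, Real.one_rpow, mul_one] at h
  linarith [abs_nonneg (f 0), abs_nonneg (deriv f 0)]

lemma abs_sub_le_of_abs_add_abs_deriv_le (ha : 0 ≤ a) (hf : Differentiable ℝ f)
    (hC : ∀ x, |f x| + |deriv f x| ≤ C * (1 + |x|) ^ (-a)) {x y : ℝ} (hxy : |x - y| ≤ 1) :
    |f x - f y| ≤ 2 ^ a * C * (1 + |x|) ^ (-a) * |x - y| := by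
  have hC0 := nonneg_of_abs_add_abs_deriv_le hC
  have hderiv : ∀ c ∈ Set.uIcc x y, ‖deriv f c‖ ≤ 2 ^ a * C * (1 + |x|) ^ (-a) := by
    intro c hc
    have hcx : |c - x| ≤ 1 := (Set.abs_sub_left_of_mem_uIcc hc).trans (abs_sub_comm x y ▸ hxy)
    calc ‖deriv f c‖ ≤ C * (1 + |c|) ^ (-a) := by
          rw [Real.norm_eq_abs]; linarith [hC c, abs_nonneg (f c)]
      _ ≤ C * (2 ^ a * (1 + |x|) ^ (-a)) := by gcongr; exact one_add_abs_rpow_neg_le ha hcx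
      _ = 2 ^ a * C * (1 + |x|) ^ (-a) := by ring
  simpa only [Real.norm_eq_abs] using Convex.norm_image_sub_le_of_norm_deriv_le
    (fun c _ => hf c) hderiv (convex_uIcc x y) Set.right_mem_uIcc Set.left_mem_uIcc

lemma sq_sub_div_sq_le_of_abs_add_abs_deriv_le (ha : 0 ≤ a) (hf : Differentiable ℝ f)
    (hC : ∀ x, |f x| + |deriv f x| ≤ C * (1 + |x|) ^ (-a)) :
    ∃ K, ∀ x y : ℝ, (f x - f y) ^ 2 / (x - y) ^ 2 ≤
      K * (((1 + |x|) ^ (-a) + (1 + |y|) ^ (-a)) * (1 + (x - y) ^ 2)⁻¹) := by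
  have hC0 := nonneg_of_abs_add_abs_deriv_le hC
  have h2a : 1 ≤ (2 : ℝ) ^ a := Real.one_le_rpow one_le_two ha
  refine ⟨4 * (2 ^ a * C) ^ 2, fun x y => ?_⟩
  set u := (1 + |x|) ^ (-a)
  set v := (1 + |y|) ^ (-a)
  have hu0 : 0 ≤ u := by positivity
  have hv0 : 0 ≤ v := by positivity
  have hu1 : u ≤ 1 := one_add_abs_rpow_neg_le_one ha x
  have hv1 : v ≤ 1 := one_add_abs_rpow_neg_le_one ha y
  rcases eq_or_ne x y with rfl | hxy
  · simp only [sub_self, ne_eq, OfNat.ofNat_ne_zero, not_false_eq_true, zero_pow, div_zero]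
    positivity
  have hd : 0 < (x - y) ^ 2 := by positivity
  set t := (1 + (x - y) ^ 2)⁻¹
  rw [div_le_iff₀ hd]
  rcases le_total |x - y| 1 with hnear | hfar
  · have hq := abs_sub_le_of_abs_add_abs_deriv_le ha hf hC hnear
    have ht : 1 / 2 ≤ t := by
      rw [one_div, inv_le_inv₀ two_pos (by positivity)]
      nlinarith [sq_abs (x - y), abs_nonneg (x - y)]
    calc (f x - f y) ^ 2 = |f x - f y| ^ 2 := (sq_abs _).symm
      _ ≤ (2 ^ a * C * u * |x - y|) ^ 2 := by gcongr
      _ = (2 ^ a * C) ^ 2 * u ^ 2 * (x - y) ^ 2 := by rw [mul_pow, sq_abs]; ring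
      _ ≤ (2 ^ a * C) ^ 2 * (4 * ((u + v) * t)) * (x - y) ^ 2 := by gcongr; nlinarith
      _ = 4 * (2 ^ a * C) ^ 2 * ((u + v) * t) * (x - y) ^ 2 := by ring
  · have hfx : |f x| ≤ C * u := by linarith [hC x, abs_nonneg (deriv f x)]
    have hfy : |f y| ≤ C * v := by linarith [hC y, abs_nonneg (deriv f y)]
    have ht : 1 / 2 ≤ t * (x - y) ^ 2 := by
      rw [← div_eq_inv_mul, le_div_iff₀ (by positivity)]
      nlinarith [sq_abs (x - y)]
    calc (f x - f y) ^ 2 ≤ (|f x| + |f y|) ^ 2 := by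
          rw [← sq_abs]; gcongr; exact abs_sub _ _
      _ ≤ (C * u + C * v) ^ 2 := by gcongr
      _ = C ^ 2 * (u + v) * (u + v) := by ring
      _ ≤ C ^ 2 * (u + v) * (4 * (t * (x - y) ^ 2)) := by gcongr; linarith
      _ ≤ (2 ^ a * C) ^ 2 * (u + v) * (4 * (t * (x - y) ^ 2)) := by
          gcongr; nlinarith
      _ = 4 * (2 ^ a * C) ^ 2 * ((u + v) * t) * (x - y) ^ 2 := by ring

lemma integrable_sq_sub_div_sq_of_abs_add_abs_deriv_le (ha : 1 < a) (hf : Differentiable ℝ f)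
    (hC : ∀ x, |f x| + |deriv f x| ≤ C * (1 + |x|) ^ (-a)) :
    Integrable fun q : ℝ × ℝ => (f q.1 - f q.2) ^ 2 / (q.1 - q.2) ^ 2 := by
  obtain ⟨K, hK⟩ := sq_sub_div_sq_le_of_abs_add_abs_deriv_le (zero_le_one.trans ha.le) hf hC
  have hw : Integrable fun x : ℝ => (1 + |x|) ^ (-a) :=
    integrable_one_add_norm (by simpa using ha)
  have hfm := hf.continuous.measurable
  refine (hw.add_mul_inv_one_add_sq_sub.const_mul K).mono'
    (by fun_prop : Measurable _).aestronglyMeasurable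
    (ae_of_all _ fun q => ?_)
  rw [Real.norm_of_nonneg (by positivity)]
  exact hK q.1 q.2

end Decay

lemma integrable_mul_sub_div_sq {f g : ℝ → ℝ} (hfm : Measurable f) (hgm : Measurable g)
    (hf : Integrable fun q : ℝ × ℝ => (f q.1 - f q.2) ^ 2 / (q.1 - q.2) ^ 2)
    (hg : Integrable fun q : ℝ × ℝ => (g q.1 - g q.2) ^ 2 / (q.1 - q.2) ^ 2) :
    Integrable fun q : ℝ × ℝ => (f q.1 - f q.2) * (g q.1 - g q.2) / (q.1 - q.2) ^ 2 := by
  refine (hf.add hg).mono' (by fun_prop : Measurable _).aestronglyMeasurable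
    (ae_of_all _ fun q => ?_)
  rw [Pi.add_apply, norm_div, norm_mul, Real.norm_of_nonneg (sq_nonneg _), ← add_div]
  gcongr
  simp only [Real.norm_eq_abs]
  nlinarith [sq_abs (f q.1 - f q.2), sq_abs (g q.1 - g q.2),
    two_mul_le_add_sq |f q.1 - f q.2| |g q.1 - g q.2|]

lemma MemC1rs.integrable_sq_sub_div_sq {r s : ℝ} {f : ℝ → ℝ} (hf : MemC1rs r s f) (hs : 0 < s) :
    Integrable fun q : ℝ × ℝ => (f q.1 - f q.2) ^ 2 / (q.1 - q.2) ^ 2 := by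
  obtain ⟨C, hC⟩ := hf.decay
  exact integrable_sq_sub_div_sq_of_abs_add_abs_deriv_le (by linarith)
    (hf.c1.differentiable one_ne_zero) hC

def covKernel (μ d : ℝ) : ℝ := 1 / d ^ 2 + (d ^ 2 - μ ^ 2) / (d ^ 2 + μ ^ 2) ^ 2

lemma abs_sub_div_add_sq_le {t m : ℝ} (ht : 0 ≤ t) (hm : 0 ≤ m) :
    |(t - m) / (t + m) ^ 2| ≤ (t + m)⁻¹ := by
  rcases (add_nonneg ht hm).eq_or_lt with h | h
  · simp [← h]
  have hsq : (t + m)⁻¹ * (t + m) ^ 2 = t + m := by field_simp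
  rw [abs_div, abs_of_pos (pow_pos h 2), div_le_iff₀ (pow_pos h 2), hsq]
  exact abs_sub_le_iff.2 ⟨by linarith, by linarith⟩

lemma covKernel_zero (d : ℝ) : covKernel 0 d = 2 / d ^ 2 := by
  rcases eq_or_ne d 0 with rfl | hd
  · simp [covKernel]
  · simp only [covKernel]; field_simp; ring

lemma abs_covKernel_le (μ : ℝ) {d : ℝ} (hd : d ≠ 0) : |covKernel μ d| ≤ 2 / d ^ 2 := by
  have hd2 : 0 < d ^ 2 := by positivity
  calc |covKernel μ d| ≤ |1 / d ^ 2| + |(d ^ 2 - μ ^ 2) / (d ^ 2 + μ ^ 2) ^ 2| := abs_add_le _ _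
    _ ≤ 1 / d ^ 2 + (d ^ 2 + μ ^ 2)⁻¹ := by
      gcongr
      · exact (abs_of_pos (by positivity)).le
      · exact abs_sub_div_add_sq_le hd2.le (sq_nonneg μ)
    _ ≤ 1 / d ^ 2 + 1 / d ^ 2 := by
      rw [one_div]; gcongr; exact le_add_of_nonneg_right (sq_nonneg μ)
    _ = 2 / d ^ 2 := by ring

lemma tendsto_covKernel_atTop (d : ℝ) :
    Tendsto (fun μ => covKernel μ d) atTop (𝓝 (1 / d ^ 2)) := by
  have hsq : Tendsto (fun μ : ℝ => d ^ 2 + μ ^ 2) atTop atTop :=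
    tendsto_atTop_add_const_left _ _ (tendsto_pow_atTop two_ne_zero)
  have hrem : Tendsto (fun μ : ℝ => (d ^ 2 - μ ^ 2) / (d ^ 2 + μ ^ 2) ^ 2) atTop (𝓝 0) :=
    squeeze_zero_norm (fun μ => abs_sub_div_add_sq_le (sq_nonneg d) (sq_nonneg μ))
      (tendsto_inv_atTop_zero.comp hsq)
  simpa only [covKernel, add_zero] using hrem.const_add (1 / d ^ 2)

lemma Vmu_eq_integral_mul_covKernel (μ : ℝ) (f g : ℝ → ℝ) :
    Vmu μ f g = (1 / (4 * Real.pi ^ 2)) *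
      ∫ q : ℝ × ℝ, (f q.1 - f q.2) * (g q.1 - g q.2) * covKernel μ (q.1 - q.2) :=
  rfl

lemma measurable_covKernel_sub (μ : ℝ) :
    Measurable fun q : ℝ × ℝ => covKernel μ (q.1 - q.2) := by
  unfold covKernel; fun_prop

lemma tendsto_integral_mul_covKernel_atTop {F : ℝ × ℝ → ℝ} (hFm : AEStronglyMeasurable F)
    (hF : Integrable fun q : ℝ × ℝ => F q / (q.1 - q.2) ^ 2) (hdiag : ∀ x, F (x, x) = 0) :
    Tendsto (fun μ => ∫ q : ℝ × ℝ, F q * covKernel μ (q.1 - q.2)) atTop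
      (𝓝 (∫ q : ℝ × ℝ, F q / (q.1 - q.2) ^ 2)) := by
  refine tendsto_integral_filter_of_dominated_convergence
    (fun q => 2 * ‖F q / (q.1 - q.2) ^ 2‖)
    (Eventually.of_forall fun μ => hFm.mul (measurable_covKernel_sub μ).aestronglyMeasurable)
    (Eventually.of_forall fun μ => ae_of_all _ fun q => ?_) (hF.norm.const_mul 2)
    (ae_of_all _ fun q => ?_)
  · obtain ⟨x, y⟩ := q
    rcases eq_or_ne x y with rfl | hxy
    · -- `covKernel μ 0 = -μ⁻²` is not dominated by `2 / 0 = 0`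
      simp [hdiag]
    calc ‖F (x, y) * covKernel μ (x - y)‖ = ‖F (x, y)‖ * |covKernel μ (x - y)| := by
          rw [norm_mul, Real.norm_eq_abs (covKernel _ _)]
      _ ≤ ‖F (x, y)‖ * (2 / (x - y) ^ 2) := by
          gcongr; exact abs_covKernel_le μ (sub_ne_zero.2 hxy)
      _ = 2 * ‖F (x, y) / (x - y) ^ 2‖ := by
          rw [norm_div, Real.norm_of_nonneg (sq_nonneg _)]; ring
  · simpa only [div_eq_mul_one_div (F q)] using
      (tendsto_covKernel_atTop (q.1 - q.2)).const_mul (F q)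

lemma integral_mul_covKernel_zero (F : ℝ × ℝ → ℝ) :
    ∫ q : ℝ × ℝ, F q * covKernel 0 (q.1 - q.2) = 2 * ∫ q : ℝ × ℝ, F q / (q.1 - q.2) ^ 2 := by
  rw [← integral_const_mul]
  congr 1 with q
  rw [covKernel_zero]
  ring

theorem Vmu_tendsto_atTop_general
    (r s : ℝ) (hs : 0 < s)
    (f g : ℝ → ℝ) (hf : MemC1rs r s f) (hg : MemC1rs r s g) :
    Tendsto (fun μ : ℝ => Vmu μ f g) atTop (𝓝 (Vinf f g)) ∧
      Vinf f g = (1 / 2) * Vmu 0 f g := by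
  have hfm := hf.c1.continuous.measurable
  have hgm := hg.c1.continuous.measurable
  have hF : Integrable fun q : ℝ × ℝ => (f q.1 - f q.2) * (g q.1 - g q.2) / (q.1 - q.2) ^ 2 :=
    integrable_mul_sub_div_sq hfm hgm (hf.integrable_sq_sub_div_sq hs)
      (hg.integrable_sq_sub_div_sq hs)
  refine ⟨?_, ?_⟩
  · exact (tendsto_integral_mul_covKernel_atTop (by fun_prop) hF (by simp)).const_mul _
  · rw [Vinf, Vmu_eq_integral_mul_covKernel, integral_mul_covKernel_zero]
    ring

/-- For `f, g ∈ C^{1,r,s}(ℝ)`, `lim_{μ→∞} V_μ(f,g)` exists and equals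
`(1/2)·V₀(f,g)`, which is `(1/(4π²)) ∬ (f(x)−f(y))(g(x)−g(y))/(x−y)² dx dy`. -/
theorem Vmu_tendsto_atTop
    (r s : ℝ) (hr : 0 < r) (hs : 0 < s)
    (f g : ℝ → ℝ) (hf : MemC1rs r s f) (hg : MemC1rs r s g) :
    Tendsto (fun μ : ℝ => Vmu μ f g) atTop (𝓝 (Vinf f g)) ∧
      Vinf f g = (1 / 2) * Vmu 0 f g :=
  Vmu_tendsto_atTop_general r s hs f g hf hg

end
end

section
/- Let N ≥ 1, let σ ∈ [−1,1], and let h be a complex-valued random variable with E h = 0, E|h|² = 1/N, E h² = σ/N, and E|√N h|⁴ ≤ C₄ for some constant C₄ > 0. Then there is a constant K, depending only on C₄, such that for all p, p' ∈ {0,1,2,3}: |E[h^p h̄^{3−p}] − E[h^{p'} h̄^{3−p'}]| ≤ K · N^{−3/2} · √(1−σ). -/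
/-!
Consecutive mixed moments differ by `E[h^q h̄^(2-q) (h̄ - h)]` and `h̄ - h = -2i Im h`, so each
difference is at most `2 E[|h|² |Im h|] ≤ 2 (E|h|⁴)^(1/2) (E (Im h)²)^(1/2)` by Cauchy–Schwarz.
The last factor carries the `√(1-σ)`: `E (Im h)² = (E|h|² - Re E h²) / 2 = (1 - σ) / (2N)`.
Telescoping over at most three steps gives the bound with `K = 3 √2 √C₄`.
-/

open MeasureTheory ComplexConjugate

lemma dist_le_mul_of_dist_succ_le {α : Type*} [PseudoMetricSpace α] {f : ℕ → α} {n : ℕ} {B : ℝ}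
    (hf : ∀ k < n, dist (f k) (f (k + 1)) ≤ B) {a b : ℕ} (ha : a ≤ n) (hb : b ≤ n) :
    dist (f a) (f b) ≤ n * B := by
  wlog hab : a < b generalizing a b
  · rcases (not_lt.mp hab).eq_or_lt with rfl | hba
    · rw [dist_self]
      rcases n.eq_zero_or_pos with rfl | hn
      · simp
      · exact mul_nonneg n.cast_nonneg (dist_nonneg.trans (hf 0 hn))
    · rw [dist_comm]
      exact this hb ha hba
  have hB : 0 ≤ B := dist_nonneg.trans (hf a (by omega))
  calc dist (f a) (f b) ≤ ∑ _k ∈ Finset.Ico a b, B :=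
        dist_le_Ico_sum_of_dist_le hab.le fun _ hk => hf _ (by omega)
    _ = (b - a : ℕ) * B := by rw [Finset.sum_const, Nat.card_Ico, nsmul_eq_mul]
    _ ≤ n * B := by gcongr; omega

namespace Complex

lemma norm_pow_mul_conj_pow_sub_succ (z : ℂ) {n q : ℕ} (hq : q < n) :
    ‖z ^ q * conj z ^ (n - q) - z ^ (q + 1) * conj z ^ (n - (q + 1))‖
      = 2 * ‖z‖ ^ (n - 1) * |z.im| := by
  obtain ⟨m, rfl⟩ := Nat.exists_eq_add_of_lt hq
  have hsplit : z ^ q * conj z ^ (q + m + 1 - q) - z ^ (q + 1) * conj z ^ (q + m + 1 - (q + 1))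
      = -(z ^ q * conj z ^ m * (z - conj z)) := by
    rw [show q + m + 1 - q = m + 1 by omega, show q + m + 1 - (q + 1) = m by omega]
    ring
  rw [hsplit, norm_neg, norm_mul, norm_mul, norm_pow, norm_pow, norm_conj, sub_conj,
    norm_mul, norm_I, mul_one, norm_real, Real.norm_eq_abs, abs_mul, abs_two,
    show q + m + 1 - 1 = q + m by omega, pow_add]
  ring

lemma im_sq_eq (z : ℂ) : z.im ^ 2 = (‖z‖ ^ 2 - (z ^ 2).re) / 2 := by
  rw [Complex.sq_norm, normSq_apply, sq z, mul_re]
  ring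

end Complex

variable {Ω : Type*} [MeasurableSpace Ω] {μ : Measure Ω}

lemma integral_norm_mul_norm_le_sqrt_mul_sqrt {E : Type*} [NormedAddCommGroup E] {f g : Ω → E}
    (hf : MemLp f 2 μ) (hg : MemLp g 2 μ) :
    ∫ ω, ‖f ω‖ * ‖g ω‖ ∂μ ≤ √(∫ ω, ‖f ω‖ ^ 2 ∂μ) * √(∫ ω, ‖g ω‖ ^ 2 ∂μ) := by
  simpa only [Real.rpow_two, ← Real.sqrt_eq_rpow] using
    integral_mul_norm_le_Lp_mul_Lq (f := f) (g := g) Real.HolderConjugate.two_two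
      (by rwa [ENNReal.ofReal_ofNat]) (by rwa [ENNReal.ofReal_ofNat])

lemma integral_im_sq {h : Ω → ℂ} (hh : MemLp h 2 μ) :
    ∫ ω, (h ω).im ^ 2 ∂μ = (∫ ω, ‖h ω‖ ^ 2 ∂μ - (∫ ω, h ω ^ 2 ∂μ).re) / 2 := by
  have hnorm : Integrable (fun ω => ‖h ω‖ ^ 2) μ := hh.integrable_norm_pow two_ne_zero
  have hsq : Integrable (fun ω => h ω ^ 2) μ :=
    hnorm.mono' (hh.1.pow 2) (.of_forall fun ω => by simp)
  have hre : Integrable (fun ω => (h ω ^ 2).re) μ := hsq.re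
  have hint_re : ∫ ω, (h ω ^ 2).re ∂μ = (∫ ω, h ω ^ 2 ∂μ).re := integral_re hsq
  simp_rw [Complex.im_sq_eq]
  rw [integral_div, integral_sub hnorm hre, hint_re]

lemma integrable_pow_mul_conj_pow [IsFiniteMeasure μ] {h : Ω → ℂ} {n q : ℕ} (hh : MemLp h n μ)
    (hq : q ≤ n) : Integrable (fun ω => h ω ^ q * conj (h ω) ^ (n - q)) μ := by
  refine hh.integrable_norm_pow'.mono' ((hh.1.pow q).mul
    ((Complex.continuous_conj.comp_aestronglyMeasurable hh.1).pow _)) (.of_forall fun ω => ?_)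
  rw [norm_mul, norm_pow, norm_pow, Complex.norm_conj, ← pow_add, Nat.add_sub_cancel' hq]

lemma norm_integral_pow_mul_conj_pow_sub_succ_le [IsFiniteMeasure μ] {h : Ω → ℂ} {n q : ℕ}
    (hh : MemLp h n μ) (hq : q < n) :
    ‖∫ ω, h ω ^ q * conj (h ω) ^ (n - q) ∂μ - ∫ ω, h ω ^ (q + 1) * conj (h ω) ^ (n - (q + 1)) ∂μ‖
      ≤ 2 * ∫ ω, ‖h ω‖ ^ (n - 1) * |(h ω).im| ∂μ := by
  rw [← integral_sub (integrable_pow_mul_conj_pow hh hq.le) (integrable_pow_mul_conj_pow hh hq),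
    ← integral_const_mul]
  refine (norm_integral_le_integral_norm _).trans_eq (integral_congr_ae (.of_forall fun ω => ?_))
  exact (Complex.norm_pow_mul_conj_pow_sub_succ _ hq).trans (mul_assoc _ _ _)

lemma integral_norm_sq_mul_abs_im_le [IsFiniteMeasure μ] {h : Ω → ℂ} (hh : MemLp h 4 μ) :
    ∫ ω, ‖h ω‖ ^ 2 * |(h ω).im| ∂μ ≤ √(∫ ω, ‖h ω‖ ^ 4 ∂μ) * √(∫ ω, (h ω).im ^ 2 ∂μ) := by
  have hmeas : AEStronglyMeasurable (fun ω => ‖h ω‖ ^ 2) μ := hh.1.norm.pow 2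
  have hsq : MemLp (fun ω => ‖h ω‖ ^ 2) 2 μ :=
    (memLp_two_iff_integrable_sq hmeas).mpr <| by
      simpa only [← pow_mul] using hh.integrable_norm_pow (by norm_num)
  have him : MemLp (fun ω => (h ω).im) 2 μ :=
    (hh.mono_exponent (by norm_num)).im
  simpa only [Real.norm_eq_abs, abs_pow, abs_norm, ← pow_mul, sq_abs] using
    integral_norm_mul_norm_le_sqrt_mul_sqrt hsq him

theorem third_cumulant_comparison_general (C₄ : ℝ) :
    ∃ K : ℝ, ∀ (Ω : Type) (_ : MeasurableSpace Ω) (P : Measure Ω),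
      IsProbabilityMeasure P →
      ∀ (N : ℕ), 1 ≤ N → ∀ σ : ℝ, σ ∈ Set.Icc (-1 : ℝ) 1 →
      ∀ h : Ω → ℂ, MemLp h 4 P →
      (∫ ω, h ω ∂P) = 0 →
      (∫ ω, ‖h ω‖ ^ 2 ∂P) = 1 / (N : ℝ) →
      (∫ ω, h ω ^ 2 ∂P) = ((σ / (N : ℝ) : ℝ) : ℂ) →
      (∫ ω, ‖(Real.sqrt N : ℂ) * h ω‖ ^ 4 ∂P) ≤ C₄ →
      ∀ p p' : ℕ, p ≤ 3 → p' ≤ 3 →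
        ‖(∫ ω, h ω ^ p * (starRingEnd ℂ (h ω)) ^ (3 - p) ∂P) -
            ∫ ω, h ω ^ p' * (starRingEnd ℂ (h ω)) ^ (3 - p') ∂P‖ ≤
          K * (N : ℝ) ^ (-(3 : ℝ) / 2) * Real.sqrt (1 - σ) := by
  refine ⟨3 * (√2 * √C₄), fun Ω _ P _ N hN1 σ _ h hh _ hnorm hsq hfourth p p' hp hp' => ?_⟩
  have hN : (0 : ℝ) < N := by exact_mod_cast hN1
  have him : ∫ ω, (h ω).im ^ 2 ∂P = (1 - σ) / (2 * N) := by
    rw [integral_im_sq (hh.mono_exponent (by norm_num)), hnorm, hsq, Complex.ofReal_re]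
    field_simp
  have hfour : ∫ ω, ‖h ω‖ ^ 4 ∂P ≤ C₄ / N ^ 2 := by
    rw [le_div_iff₀ (by positivity), mul_comm, ← integral_const_mul]
    refine le_of_eq_of_le (integral_congr_ae (.of_forall fun ω => ?_)) hfourth
    rw [norm_mul, Complex.norm_real, Real.norm_of_nonneg (Real.sqrt_nonneg _), mul_pow,
      show 4 = 2 * 2 from rfl, pow_mul, Real.sq_sqrt hN.le]
  have hrpow : (N : ℝ) ^ (-(3 : ℝ) / 2) = (N * √N)⁻¹ := by
    rw [neg_div, Real.rpow_neg hN.le, show (3 : ℝ) / 2 = 1 + 1 / 2 by norm_num,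
      Real.rpow_add hN, Real.rpow_one, ← Real.sqrt_eq_rpow]
  have hstep : ∀ q < 3, dist (∫ ω, h ω ^ q * (starRingEnd ℂ (h ω)) ^ (3 - q) ∂P)
      (∫ ω, h ω ^ (q + 1) * (starRingEnd ℂ (h ω)) ^ (3 - (q + 1)) ∂P)
      ≤ √2 * √C₄ * (N : ℝ) ^ (-(3 : ℝ) / 2) * √(1 - σ) := fun q hq =>
    calc _ ≤ 2 * ∫ ω, ‖h ω‖ ^ 2 * |(h ω).im| ∂P := by
          rw [dist_eq_norm]
          exact norm_integral_pow_mul_conj_pow_sub_succ_le (hh.mono_exponent (by norm_num)) hq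
      _ ≤ 2 * (√(C₄ / N ^ 2) * √((1 - σ) / (2 * N))) := by
          rw [← him]
          gcongr
          exact (integral_norm_sq_mul_abs_im_le hh).trans (by gcongr)
      _ = √2 * √C₄ * (N : ℝ) ^ (-(3 : ℝ) / 2) * √(1 - σ) := by
          rw [hrpow, Real.sqrt_div' _ (by positivity), Real.sqrt_sq hN.le,
            Real.sqrt_div' _ (by positivity), Real.sqrt_mul zero_le_two]
          field_simp
          rw [Real.sq_sqrt zero_le_two]
          ring
  have htelescope := dist_le_mul_of_dist_succ_le hstep hp hp'
  rw [dist_eq_norm] at htelescope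
  push_cast at htelescope
  linarith

/-- Third-moment (cumulant) comparison: if `E h = 0`, `E|h|² = 1/N`,
`E h² = σ/N` and `E|√N h|⁴ ≤ C₄`, then there is a constant `K`, depending only on `C₄`,
with `|E[h^p h̄^{3−p}] − E[h^{p'} h̄^{3−p'}]| ≤ K N^{−3/2} √(1−σ)` for all
`p, p' ∈ {0,1,2,3}`. -/
theorem third_cumulant_comparison (C₄ : ℝ) (hC₄ : 0 < C₄) :
    ∃ K : ℝ, ∀ (Ω : Type) (_ : MeasurableSpace Ω) (P : Measure Ω),
      IsProbabilityMeasure P →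
      ∀ (N : ℕ), 1 ≤ N → ∀ σ : ℝ, σ ∈ Set.Icc (-1 : ℝ) 1 →
      ∀ h : Ω → ℂ, MemLp h 4 P →
      (∫ ω, h ω ∂P) = 0 →
      (∫ ω, ‖h ω‖ ^ 2 ∂P) = 1 / (N : ℝ) →
      (∫ ω, h ω ^ 2 ∂P) = ((σ / (N : ℝ) : ℝ) : ℂ) →
      (∫ ω, ‖(Real.sqrt N : ℂ) * h ω‖ ^ 4 ∂P) ≤ C₄ →
      ∀ p p' : ℕ, p ≤ 3 → p' ≤ 3 →
        ‖(∫ ω, h ω ^ p * (starRingEnd ℂ (h ω)) ^ (3 - p) ∂P) -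
            ∫ ω, h ω ^ p' * (starRingEnd ℂ (h ω)) ^ (3 - p') ∂P‖ ≤
          K * (N : ℝ) ^ (-(3 : ℝ) / 2) * Real.sqrt (1 - σ) :=
  third_cumulant_comparison_general C₄
end
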